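/- Let T be a tree of order n with diameter 3. Then Sd_s(T, T^c) = n − 2. -/

import Mathlib

open SimpleGraph

variable {V : Type*}

/-- `w` strongly resolves `u` and `v` in `G`. -/
def StronglyResolves (G : SimpleGraph V) (w u v : V) : Prop :=
  G.dist u w = G.dist u v + G.dist v w ∨ G.dist v w = G.dist v u + G.dist u w

/-- `S` is a strong metric generator for `G`. -/
def IsStrongMetricGen (G : SimpleGraph V) (S : Set V) : Prop :=
  ∀ u v : V, u ≠ v → ∃ w ∈ S, StronglyResolves G w u v

/-- The simultaneous strong metric dimension of a family of graphs. -/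
noncomputable def SdS (𝒢 : Set (SimpleGraph V)) : ℕ :=
  sInf {n | ∃ S : Set V, S.ncard = n ∧ ∀ G ∈ 𝒢, IsStrongMetricGen G S}

/-- The strong metric dimension of a single graph. -/
noncomputable def sdim (G : SimpleGraph V) : ℕ := SdS {G}

/-- `u` is maximally distant from `v` in `G`. -/
def MaxDistantFrom (G : SimpleGraph V) (u v : V) : Prop :=
  ∀ w : V, G.Adj u w → G.dist v w ≤ G.dist v u

/-- `u` and `v` are mutually maximally distant in `G`. -/
def MutuallyMaxDistant (G : SimpleGraph V) (u v : V) : Prop :=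
  MaxDistantFrom G u v ∧ MaxDistantFrom G v u

/-- The strong resolving graph of `G`. -/
def SRG (G : SimpleGraph V) : SimpleGraph V where
  Adj u v := u ≠ v ∧ MutuallyMaxDistant G u v
  symm := by
    constructor
    intro u v h
    exact ⟨h.1.symm, h.2.2, h.2.1⟩
  loopless := by constructor; intro u h; exact h.1 rfl

/-- The boundary of `G`: vertices mutually maximally distant from some vertex. -/
def Boundary (G : SimpleGraph V) : Set V :=
  {u | ∃ v, MutuallyMaxDistant G u v}

/-- `S` is a vertex cover of `G`. -/
def IsVertexCover (G : SimpleGraph V) (S : Set V) : Prop :=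
  ∀ u v : V, G.Adj u v → u ∈ S ∨ v ∈ S

/-- The vertex cover number. -/
noncomputable def vcNum (G : SimpleGraph V) : ℕ :=
  sInf {n | ∃ S : Set V, S.ncard = n ∧ _root_.IsVertexCover G S}

/-- A strong resolving cover: simultaneously a vertex cover and a strong metric generator. -/
def IsStrongResCover (G : SimpleGraph V) (S : Set V) : Prop :=
  _root_.IsVertexCover G S ∧ IsStrongMetricGen G S

/-- The strong resolving cover number `β_s`. -/
noncomputable def betaS (G : SimpleGraph V) : ℕ :=
  sInf {n | ∃ S : Set V, S.ncard = n ∧ IsStrongResCover G S}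

/-- `G` is 2-antipodal. -/
def TwoAntipodal (G : SimpleGraph V) : Prop :=
  ∀ x : V, ∃! y : V, G.dist x y = G.diam

/-- `v` is a leaf of `G` (degree one). -/
def IsLeaf (G : SimpleGraph V) (v : V) : Prop := ∃! w : V, G.Adj v w

/-!
A tree of diameter three is a double star: two adjacent centres `b` and `c`, every other vertex
a leaf at one of them, and each centre carrying a leaf. Any two leaves are mutually maximally
distant in `T`, and `b`, `c` are mutually maximally distant in `Tᶜ` (where they lie at distance
three), while a strong resolver of a mutually maximally distant pair must be one of the pair.
So a common strong metric generator contains all leaves but one and one of the centres, hence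
at least `n - 2` vertices. Conversely, removing a centre `c` and a leaf `y` at `c` leaves a
common generator: a leaf at `b` resolves `c, y` in `T`, and `b` resolves them in `Tᶜ`.
-/

section Metric

variable {G : SimpleGraph V} {u v w m : V}

lemma StronglyResolves.symm (h : StronglyResolves G w u v) : StronglyResolves G w v u :=
  Or.symm h

lemma stronglyResolves_left (G : SimpleGraph V) (u v : V) : StronglyResolves G u u v :=
  Or.inr (by simp)

lemma stronglyResolves_right (G : SimpleGraph V) (u v : V) : StronglyResolves G v u v :=
  Or.inl (by simp)

lemma stronglyResolves_of_le (hG : G.Connected) (h : G.dist u v + G.dist v w ≤ G.dist u w) :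
    StronglyResolves G w u v :=
  Or.inl (le_antisymm hG.dist_triangle h)

lemma SimpleGraph.Reachable.exists_adj_dist_lt (h : G.Reachable u v) (hne : u ≠ v) :
    ∃ m, G.Adj u m ∧ G.dist m v < G.dist u v := by
  obtain ⟨p, hp⟩ := h.exists_walk_length_eq_dist
  cases p with
  | nil => exact absurd rfl hne
  | cons hadj q =>
    refine ⟨_, hadj, ?_⟩
    have := G.dist_le q
    rw [← hp, Walk.length_cons]
    omega

lemma SimpleGraph.Reachable.two_lt_dist (h : G.Reachable u v) (hne : u ≠ v) (hadj : ¬G.Adj u v)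
    (hcommon : ∀ m, G.Adj u m → ¬G.Adj m v) : 2 < G.dist u v := by
  have hempty : G.commonNeighbors u v = ∅ := by
    ext m
    simpa [mem_commonNeighbors] using fun hum hvm => hcommon m hum hvm.symm
  have := two_lt_edist_iff.mpr ⟨hne, hadj, hempty⟩
  rw [← h.coe_dist_eq_edist] at this
  exact_mod_cast this

lemma maxDistantFrom_of_forall_adj_eq (hG : G.Connected) (hu : ∀ w, G.Adj u w → w = m)
    (huv : u ≠ v) : MaxDistantFrom G u v := by
  intro w hw
  obtain ⟨m', hm', hlt⟩ := (hG u v).exists_adj_dist_lt huv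
  rw [hu w hw, ← hu m' hm', dist_comm, dist_comm (u := v)]
  exact hlt.le

lemma MaxDistantFrom.eq_of_dist_eq_add (hG : G.Connected) (h : MaxDistantFrom G v u)
    (hw : G.dist u w = G.dist u v + G.dist v w) : w = v := by
  by_contra hne
  obtain ⟨m, hvm, hlt⟩ := (hG v w).exists_adj_dist_lt (Ne.symm hne)
  have hm := h m hvm
  have := hG.dist_triangle (u := u) (v := m) (w := w)
  omega

lemma MutuallyMaxDistant.eq_or_eq_of_stronglyResolves (hG : G.Connected)
    (h : MutuallyMaxDistant G u v) (hw : StronglyResolves G w u v) : w = u ∨ w = v := by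
  rcases hw with hw | hw
  · exact Or.inr (h.2.eq_of_dist_eq_add hG hw)
  · exact Or.inl (h.1.eq_of_dist_eq_add hG hw)

lemma IsStrongMetricGen.mem_or_mem (hG : G.Connected) {S : Set V} (hS : IsStrongMetricGen G S)
    (h : MutuallyMaxDistant G u v) (hne : u ≠ v) : u ∈ S ∨ v ∈ S := by
  obtain ⟨w, hwS, hw⟩ := hS u v hne
  rcases h.eq_or_eq_of_stronglyResolves hG hw with rfl | rfl
  · exact Or.inl hwS
  · exact Or.inr hwS

lemma isStrongMetricGen_compl_pair_of_stronglyResolves (hwu : w ≠ u) (hwv : w ≠ v)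
    (h : StronglyResolves G w u v) : IsStrongMetricGen G {u, v}ᶜ := by
  intro p q hpq
  by_cases hp : p ∈ ({u, v}ᶜ : Set V)
  · exact ⟨p, hp, stronglyResolves_left G p q⟩
  by_cases hq : q ∈ ({u, v}ᶜ : Set V)
  · exact ⟨q, hq, stronglyResolves_right G p q⟩
  refine ⟨w, by simp [hwu, hwv], ?_⟩
  simp only [Set.mem_compl_iff, not_not, Set.mem_insert_iff, Set.mem_singleton_iff] at hp hq
  rcases hp with rfl | rfl <;> rcases hq with rfl | rfl
  exacts [absurd rfl hpq, h, h.symm, absurd rfl hpq]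

lemma compl_adj_of_forall_adj_eq (hv : ∀ w, G.Adj v w → w = m) (hwv : w ≠ v) (hwm : w ≠ m) :
    Gᶜ.Adj v w := by
  rw [compl_adj]
  exact ⟨hwv.symm, fun hadj => hwm (hv w hadj)⟩

end Metric

lemma Set.ncard_compl_le_ncard_of_subsingleton_sdiff {α : Type*} [Finite α] {A S : Set α}
    (hA : (S ∩ A).Nonempty) (hS : (Aᶜ \ S).Subsingleton) : Aᶜ.ncard ≤ S.ncard := by
  have h1 : (Aᶜ \ S).ncard ≤ 1 := Set.ncard_le_one_iff_subsingleton.mpr hS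
  have h2 : 0 < (S ∩ A).ncard := (Set.ncard_pos).mpr hA
  have h3 := Set.ncard_inter_add_ncard_sdiff_eq_ncard Aᶜ S
  have h4 := Set.ncard_inter_add_ncard_sdiff_eq_ncard S A
  rw [Set.sdiff_eq_compl_inter] at h4
  omega

section Tree

variable {T : SimpleGraph V} {b c u v w x y : V}

lemma SimpleGraph.IsTree.eq_of_adj_of_dist_eq_add_one (hT : T.IsTree) (hv : T.Adj v c)
    (hw : T.Adj w c) (hvd : T.dist u c = T.dist u v + 1) (hwd : T.dist u c = T.dist u w + 1) :
    v = w := by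
  obtain ⟨p, hp⟩ := (hT.connected u v).exists_walk_length_eq_dist
  obtain ⟨q, hq⟩ := (hT.connected u w).exists_walk_length_eq_dist
  have hpc : (p.concat hv).IsPath :=
    Walk.isPath_of_length_eq_dist _ (by rw [Walk.length_concat, hp, hvd])
  have hqc : (q.concat hw).IsPath :=
    Walk.isPath_of_length_eq_dist _ (by rw [Walk.length_concat, hq, hwd])
  have heq := congrArg Subtype.val ((hT.isAcyclic.subsingleton_path u c).elim ⟨_, hpc⟩ ⟨_, hqc⟩)
  exact (Walk.concat_inj heq).1

lemma SimpleGraph.IsTree.dist_le_one_of_dist_eq_add_one (hT : T.IsTree)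
    (hd3 : ∀ u v, T.dist u v ≤ 3) (hbc : T.Adj b c) (hcy : T.Adj c y) (hyb : y ≠ b)
    (hv : T.dist v c = T.dist v b + 1) : T.dist v b ≤ 1 := by
  rcases hT.dist_eq_dist_add_one_of_adj v hcy with hy | hy
  · exact absurd (hT.eq_of_adj_of_dist_eq_add_one hcy.symm hbc hy hv) hyb
  · have := hd3 v y
    omega

lemma SimpleGraph.IsTree.eq_or_adj_of_path_of_dist_le_three (hT : T.IsTree)
    (hd3 : ∀ u v, T.dist u v ≤ 3) (hxb : T.Adj x b) (hxc : x ≠ c) (hbc : T.Adj b c)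
    (hcy : T.Adj c y) (hyb : y ≠ b) (v : V) : v = b ∨ v = c ∨ T.Adj v b ∨ T.Adj v c := by
  rcases hT.dist_eq_dist_add_one_of_adj v hbc with hv | hv
  · have := hT.dist_le_one_of_dist_eq_add_one hd3 hbc.symm hxb.symm hxc hv
    rcases Nat.le_one_iff_eq_zero_or_eq_one.mp this with h | h
    · exact Or.inr (Or.inl (hT.connected.dist_eq_zero_iff.mp h))
    · exact Or.inr (Or.inr (Or.inr (dist_eq_one_iff_adj.mp h)))
  · have := hT.dist_le_one_of_dist_eq_add_one hd3 hbc hcy hyb hv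
    rcases Nat.le_one_iff_eq_zero_or_eq_one.mp this with h | h
    · exact Or.inl (hT.connected.dist_eq_zero_iff.mp h)
    · exact Or.inr (Or.inr (Or.inl (dist_eq_one_iff_adj.mp h)))

lemma SimpleGraph.IsTree.forall_adj_iff_of_adj (hT : T.IsTree) (hbc : T.Adj b c)
    (hcover : ∀ v, v = b ∨ v = c ∨ T.Adj v b ∨ T.Adj v c) (hvb : T.Adj v b) (hvc : v ≠ c) :
    ∀ w, T.Adj v w ↔ w = b := by
  refine fun w => ⟨fun hvw => ?_, fun hwb => hwb ▸ hvb⟩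
  by_contra hwb
  have hbv : T.dist b v = 1 := dist_eq_one_iff_adj.mpr hvb.symm
  have hbc' : T.dist b c = 1 := dist_eq_one_iff_adj.mpr hbc
  have hbw : T.dist b w = 2 := by
    rcases hT.dist_eq_dist_add_one_of_adj b hvw with h | h
    · exact absurd (hT.connected.dist_eq_zero_iff.mp (by omega)).symm hwb
    · omega
  rcases hcover w with rfl | rfl | hw | hw
  · exact hwb rfl
  · omega
  · simp [dist_eq_one_iff_adj.mpr hw.symm] at hbw
  · exact hvc (hT.eq_of_adj_of_dist_eq_add_one (u := b) hvw hw.symm (by omega) (by omega))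

end Tree

structure IsDoubleStar (T : SimpleGraph V) (b c : V) : Prop where
  adj : T.Adj b c
  leaf : ∀ v, v ≠ b → v ≠ c → (∀ w, T.Adj v w ↔ w = b) ∨ (∀ w, T.Adj v w ↔ w = c)
  exists_leaf_left : ∃ x, x ≠ c ∧ T.Adj x b
  exists_leaf_right : ∃ y, y ≠ b ∧ T.Adj y c

lemma SimpleGraph.IsTree.exists_isDoubleStar {T : SimpleGraph V} (hT : T.IsTree)
    (hd : T.diam = 3) : ∃ b c, IsDoubleStar T b c := by
  have hd3 : ∀ u v, T.dist u v ≤ 3 := fun u v =>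
    hd ▸ dist_le_diam (ediam_ne_top_of_diam_ne_zero (by omega))
  have := hT.connected.nonempty
  obtain ⟨x, y, hxy⟩ := T.exists_dist_eq_diam
  obtain ⟨p, hp⟩ := (hT.connected x y).exists_walk_length_eq_dist
  rw [hxy, hd] at hp
  rcases p with _ | ⟨hxb, _ | ⟨hbc, _ | ⟨hcy, _ | ⟨_, _⟩⟩⟩⟩ <;> simp at hp
  rename_i b c
  have hxc : x ≠ c := by
    rintro rfl
    simp [dist_eq_one_iff_adj.mpr hcy, hd] at hxy
  have hyb : y ≠ b := by
    rintro rfl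
    simp [dist_eq_one_iff_adj.mpr hxb, hd] at hxy
  have hcover := hT.eq_or_adj_of_path_of_dist_le_three hd3 hxb hxc hbc hcy hyb
  have hcover' : ∀ v, v = c ∨ v = b ∨ T.Adj v c ∨ T.Adj v b := fun v => by
    rcases hcover v with h | h | h | h <;> simp [h]
  refine ⟨b, c, hbc, fun v hvb hvc => ?_, ⟨x, hxc, hxb⟩, ⟨y, hyb, hcy.symm⟩⟩
  rcases hcover v with h | h | h | h
  · exact absurd h hvb
  · exact absurd h hvc
  · exact Or.inl (hT.forall_adj_iff_of_adj hbc hcover h hvc)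
  · exact Or.inr (hT.forall_adj_iff_of_adj hbc.symm hcover' h hvb)

namespace IsDoubleStar

variable {T : SimpleGraph V} {b c u v y : V}

lemma symm (h : IsDoubleStar T b c) : IsDoubleStar T c b :=
  ⟨h.adj.symm, fun v hvc hvb => (h.leaf v hvb hvc).symm, h.exists_leaf_right, h.exists_leaf_left⟩

lemma exists_forall_adj_eq (h : IsDoubleStar T b c) (hvb : v ≠ b) (hvc : v ≠ c) :
    ∃ m, ∀ w, T.Adj v w → w = m := by
  rcases h.leaf v hvb hvc with hl | hl
  exacts [⟨b, fun w => (hl w).1⟩, ⟨c, fun w => (hl w).1⟩]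

lemma forall_adj_iff_of_adj (h : IsDoubleStar T b c) (hyc : T.Adj y c) (hyb : y ≠ b) :
    ∀ w, T.Adj y w ↔ w = c := by
  rcases h.leaf y hyb hyc.ne with hl | hl
  · exact absurd ((hl c).1 hyc) h.adj.ne'
  · exact hl

lemma mutuallyMaxDistant (h : IsDoubleStar T b c) (hT : T.Connected) (hub : u ≠ b)
    (huc : u ≠ c) (hvb : v ≠ b) (hvc : v ≠ c) (hne : u ≠ v) : MutuallyMaxDistant T u v := by
  obtain ⟨m, hm⟩ := h.exists_forall_adj_eq hub huc
  obtain ⟨m', hm'⟩ := h.exists_forall_adj_eq hvb hvc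
  exact ⟨maxDistantFrom_of_forall_adj_eq hT hm hne, maxDistantFrom_of_forall_adj_eq hT hm' hne.symm⟩

lemma compl_connected (h : IsDoubleStar T b c) : Tᶜ.Connected := by
  obtain ⟨x, hxc, hxb⟩ := h.exists_leaf_left
  obtain ⟨y, hyb, hyc⟩ := h.exists_leaf_right
  have hx : ∀ w, T.Adj x w → w = b := fun w => (h.symm.forall_adj_iff_of_adj hxb hxc w).1
  have hy : ∀ w, T.Adj y w → w = c := fun w => (h.forall_adj_iff_of_adj hyc hyb w).1
  have hyx : y ≠ x := fun e => h.adj.ne (hx c (e ▸ hyc)).symm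
  have hreach : ∀ v, Tᶜ.Reachable x v := by
    intro v
    by_cases hvx : v = x
    · exact hvx ▸ Reachable.refl _
    by_cases hvb : v = b
    · subst hvb
      exact (compl_adj_of_forall_adj_eq hx hyx hyb).reachable.trans
        (compl_adj_of_forall_adj_eq hy hyb.symm h.adj.ne).reachable
    · exact (compl_adj_of_forall_adj_eq hx hvx hvb).reachable
  have : Nonempty V := ⟨b⟩
  exact ⟨fun u v => (hreach u).symm.trans (hreach v)⟩

lemma two_lt_dist_compl (h : IsDoubleStar T b c) : 2 < Tᶜ.dist c b := by
  refine (h.compl_connected c b).two_lt_dist h.adj.ne'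
    (fun hcb => ((compl_adj _ _ _).mp hcb).2 h.adj.symm) fun m hcm hmb => ?_
  rw [compl_adj] at hcm hmb
  rcases h.leaf m hmb.1 hcm.1.symm with hl | hl
  · exact hmb.2 ((hl b).2 rfl)
  · exact hcm.2 ((hl c).2 rfl).symm

lemma maxDistantFrom_compl (h : IsDoubleStar T b c) : MaxDistantFrom Tᶜ b c := by
  intro w hbw
  obtain ⟨x, hxc, hxb⟩ := h.exists_leaf_left
  have hx : ∀ w, T.Adj x w → w = b := fun w => (h.symm.forall_adj_iff_of_adj hxb hxc w).1
  have hwx : w ≠ x := by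
    rintro rfl
    exact ((compl_adj _ _ _).mp hbw).2 hxb.symm
  have hcx : Tᶜ.Adj c x := (compl_adj_of_forall_adj_eq hx hxc.symm h.adj.ne').symm
  have hxw : Tᶜ.Adj x w := compl_adj_of_forall_adj_eq hx hwx hbw.ne'
  have hcw := dist_le (Walk.cons hcx (Walk.cons hxw Walk.nil))
  have hcb := h.two_lt_dist_compl
  simp only [Walk.length_cons, Walk.length_nil] at hcw
  omega

lemma mutuallyMaxDistant_compl (h : IsDoubleStar T b c) : MutuallyMaxDistant Tᶜ b c :=
  ⟨h.maxDistantFrom_compl, h.symm.maxDistantFrom_compl⟩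

/-- The resolver of `c` and `y` is a leaf `x` at `b`: `d(y, x) = 3 = d(y, c) + d(c, x)`. -/
lemma isStrongMetricGen_compl_pair (h : IsDoubleStar T b c) (hT : T.Connected) (hyc : T.Adj y c)
    (hyb : y ≠ b) : IsStrongMetricGen T {c, y}ᶜ := by
  obtain ⟨x, hxc, hxb⟩ := h.exists_leaf_left
  have hx := h.symm.forall_adj_iff_of_adj hxb hxc
  have hy := h.forall_adj_iff_of_adj hyc hyb
  have hxy : x ≠ y := fun e => h.adj.ne ((hx c).1 (e ▸ hyc)).symm
  have hyx : 2 < T.dist y x := (hT y x).two_lt_dist hxy.symm (fun e => hxc ((hy x).1 e))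
    fun m hym hmx => h.adj.ne (((hx m).1 hmx.symm).symm.trans ((hy m).1 hym))
  have hyc' : T.dist y c = 1 := dist_eq_one_iff_adj.mpr hyc
  have hcx := dist_le (Walk.cons h.adj.symm (Walk.cons hxb.symm Walk.nil))
  simp only [Walk.length_cons, Walk.length_nil] at hcx
  exact isStrongMetricGen_compl_pair_of_stronglyResolves hxc hxy
    (stronglyResolves_of_le hT (by omega)).symm

/-- The resolver of `c` and `y` in `Tᶜ` is `b`: `d(c, b) = 3 = d(c, y) + d(y, b)`. -/
lemma isStrongMetricGen_compl_compl_pair (h : IsDoubleStar T b c) (hyc : T.Adj y c)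
    (hyb : y ≠ b) : IsStrongMetricGen Tᶜ {c, y}ᶜ := by
  obtain ⟨x, hxc, hxb⟩ := h.exists_leaf_left
  have hx : ∀ w, T.Adj x w → w = b := fun w => (h.symm.forall_adj_iff_of_adj hxb hxc w).1
  have hy : ∀ w, T.Adj y w → w = c := fun w => (h.forall_adj_iff_of_adj hyc hyb w).1
  have hxy : x ≠ y := fun e => h.adj.ne (hx c (e ▸ hyc)).symm
  have hcx : Tᶜ.Adj c x := (compl_adj_of_forall_adj_eq hx hxc.symm h.adj.ne').symm
  have hxy' : Tᶜ.Adj x y := compl_adj_of_forall_adj_eq hx hxy.symm hyb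
  have hcy := dist_le (Walk.cons hcx (Walk.cons hxy' Walk.nil))
  have hyb' : Tᶜ.dist y b = 1 :=
    dist_eq_one_iff_adj.mpr (compl_adj_of_forall_adj_eq hy hyb.symm h.adj.ne)
  have hcb := h.two_lt_dist_compl
  simp only [Walk.length_cons, Walk.length_nil] at hcy
  exact isStrongMetricGen_compl_pair_of_stronglyResolves h.adj.ne hyb.symm
    (stronglyResolves_of_le h.compl_connected (by omega))

lemma ncard_compl_pair_le [Finite V] (h : IsDoubleStar T b c) (hT : T.Connected) {S : Set V}
    (hS : IsStrongMetricGen T S) (hSc : IsStrongMetricGen Tᶜ S) :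
    ({b, c}ᶜ : Set V).ncard ≤ S.ncard := by
  refine Set.ncard_compl_le_ncard_of_subsingleton_sdiff ?_ ?_
  · rcases hSc.mem_or_mem h.compl_connected h.mutuallyMaxDistant_compl h.adj.ne with hb | hc
    exacts [⟨b, hb, by simp⟩, ⟨c, hc, by simp⟩]
  · rintro u ⟨hu, huS⟩ v ⟨hv, hvS⟩
    by_contra hne
    simp only [Set.mem_compl_iff, Set.mem_insert_iff, Set.mem_singleton_iff, not_or] at hu hv
    rcases hS.mem_or_mem hT (h.mutuallyMaxDistant hT hu.1 hu.2 hv.1 hv.2 hne) hne with h' | h'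
    exacts [huS h', hvS h']

end IsDoubleStar

theorem stmt18 [Fintype V] (T : SimpleGraph V) (hT : T.IsTree) (hd : T.diam = 3) :
    SdS {T, Tᶜ} = Fintype.card V - 2 := by
  obtain ⟨b, c, h⟩ := hT.exists_isDoubleStar hd
  obtain ⟨y, hyb, hyc⟩ := h.exists_leaf_right
  have hcard {u v : V} (huv : u ≠ v) : ({u, v}ᶜ : Set V).ncard = Fintype.card V - 2 := by
    rw [Set.ncard_compl, Set.ncard_pair huv, Nat.card_eq_fintype_card]
  have hmem : Fintype.card V - 2 ∈ {n | ∃ S : Set V, S.ncard = n ∧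
      ∀ G ∈ ({T, Tᶜ} : Set (SimpleGraph V)), IsStrongMetricGen G S} :=
    ⟨{c, y}ᶜ, hcard hyc.ne', by
      simpa using ⟨h.isStrongMetricGen_compl_pair hT.connected hyc hyb,
        h.isStrongMetricGen_compl_compl_pair hyc hyb⟩⟩
  refine le_antisymm (Nat.sInf_le hmem) (le_csInf ⟨_, hmem⟩ ?_)
  rintro _ ⟨S, rfl, hS⟩
  rw [← hcard h.adj.ne]
  exact h.ncard_compl_pair_le hT.connected (hS T (by simp)) (hS Tᶜ (by simp))
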